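/- Let G be a finite abelian p-group and T a subgroup of index p. Let M be a subgroup of index p^2 contained in T, with G-levels (l, L) and T-levels (l_c, L_c). Then l_c = L_c, and: G[p^l] ⊆ T if and only if l = l_c = L_c < L; moreover G[p^l] ⊄ T if and only if l ≤ l_c = L_c = L. -/

import Mathlib

/-!
Let `c` be the first index with `G[p^c] ∩ T ⊄ M`. Since `M` is maximal in `T` (index `p`),
`(G[p^j] ∩ T) + M = T` holds exactly when `G[p^j] ∩ T ⊄ M`, so `l_c = L_c = c`; clearly `l ≤ c`.
If `G[p^l] ⊆ T`, then `G[p^l] ∩ T = G[p^l] ⊄ M` gives `c = l`, and `G[p^j] + M ⊆ T ≠ G` for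
`j ≤ l` gives `L > l`. Otherwise `G[p^c] ⊄ T`, so `G[p^c] + T = G` by maximality of `T`, and the
modular law turns `(G[p^c] ∩ T) + M = T` into `G[p^c] + M = G`, i.e. `L = c`.
-/

/-- The `p^i`-torsion subgroup `G[p^i] = {x ∈ G : p^i • x = 0}`. -/
def pTors (p i : ℕ) (G : Type*) [AddCommGroup G] : AddSubgroup G where
  carrier := {x | (p ^ i) • x = 0}
  zero_mem' := by simp
  add_mem' := by
    intro a b ha hb
    simp only [Set.mem_setOf_eq, smul_add] at *
    rw [ha, hb, add_zero]
  neg_mem' := by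
    intro a ha
    simp only [Set.mem_setOf_eq, smul_neg] at *
    rw [ha, neg_zero]

/-- The lower `T`-level `ℓ_T(M) = 1 + max{ i : T[p^i] ⊆ M ∩ T }` of a subgroup `M`.
For `T = ⊤` this is the `G`-level `ℓ(M)`. -/
noncomputable def levelL (p : ℕ) {G : Type*} [AddCommGroup G] (T M : AddSubgroup G) : ℕ :=
  1 + sSup {i : ℕ | pTors p i G ⊓ T ≤ M ⊓ T}

/-- The upper `T`-level `L_T(M) = min{ j : T[p^j] + (M ∩ T) = T }` of a subgroup `M`.
For `T = ⊤` this is the `G`-level `L(M)`. -/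
noncomputable def levelU (p : ℕ) {G : Type*} [AddCommGroup G] (T M : AddSubgroup G) : ℕ :=
  sInf {j : ℕ | (pTors p j G ⊓ T) ⊔ (M ⊓ T) = T}

/-- The subgroup `pG` of `G`. -/
def pMul (p : ℕ) (G : Type*) [AddCommGroup G] : AddSubgroup G :=
  (AddMonoidHom.mk' (fun x : G => p • x) (fun a b => smul_add p a b)).range

theorem Nat.one_add_sSup_eq_sInf_not {P : ℕ → Prop} (hP : ∀ ⦃i j⦄, i ≤ j → P j → P i)
    (h0 : P 0) (hex : ∃ n, ¬ P n) : 1 + sSup {i | P i} = sInf {i | ¬ P i} := by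
  set n := sInf {i | ¬ P i}
  have hn : ¬ P n := Nat.sInf_mem hex
  have hpos : n ≠ 0 := fun h => hn (h ▸ h0)
  have hset : {i | P i} = Set.Iic (n - 1) := by
    ext i
    refine ⟨fun hi => ?_, fun hi => ?_⟩
    · by_contra hlt
      exact hn (hP (by simp only [Set.mem_Iic] at hlt; omega) hi)
    · have hlt : i < n := by simp only [Set.mem_Iic] at hi; omega
      by_contra hPi
      exact Nat.notMem_of_lt_sInf hlt hPi
  rw [hset, csSup_Iic]
  omega

namespace AddSubgroup

variable {G : Type*} [AddCommGroup G] {K M T : AddSubgroup G}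

theorem eq_or_eq_of_relIndex_prime (hMK : M ≤ K) (hKT : K ≤ T) (hp : (M.relIndex T).Prime) :
    K = M ∨ K = T := by
  rw [← relIndex_mul_relIndex M K T hMK hKT, Nat.prime_mul_iff] at hp
  rcases hp with ⟨-, h⟩ | ⟨-, h⟩
  · exact Or.inr (le_antisymm hKT (relIndex_eq_one.1 h))
  · exact Or.inl (le_antisymm (relIndex_eq_one.1 h) hMK)

theorem sup_eq_iff_not_le_of_relIndex_prime (hKT : K ≤ T) (hMT : M ≤ T)
    (hp : (M.relIndex T).Prime) : K ⊔ M = T ↔ ¬ K ≤ M := by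
  refine ⟨fun h hKM => hp.ne_one (relIndex_eq_one.2 ?_), fun hKM => ?_⟩
  · rw [← h, sup_eq_right.2 hKM]
  · rcases eq_or_eq_of_relIndex_prime le_sup_right (sup_le hKT hMT) hp with h | h
    · exact absurd (h ▸ le_sup_left) hKM
    · exact h

theorem not_inf_le_of_sup_eq_top (hMT : M ≤ T) (hTM : ¬ T ≤ M) (h : K ⊔ M = ⊤) :
    ¬ K ⊓ T ≤ M := by
  intro hKM
  have : (M ⊔ K) ⊓ T = M ⊔ K ⊓ T := sup_inf_assoc_of_le K hMT
  rw [sup_comm, h, top_inf_eq, sup_eq_left.2 hKM] at this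
  exact hTM this.le

end AddSubgroup

section Levels

variable {p : ℕ} {G : Type*} [AddCommGroup G]

theorem mem_pTors {i : ℕ} {x : G} : x ∈ pTors p i G ↔ p ^ i • x = 0 := Iff.rfl

theorem pTors_mono {i j : ℕ} (h : i ≤ j) : pTors p i G ≤ pTors p j G := by
  intro x hx
  rw [mem_pTors, ← Nat.sub_add_cancel h, pow_add, mul_smul, hx, smul_zero]

theorem pTors_zero : pTors p 0 G = ⊥ := by
  ext x
  simp [mem_pTors]

theorem exists_pTors_sup_eq_top (hpG : ∀ g : G, ∃ k : ℕ, p ^ k • g = 0) (M : AddSubgroup G)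
    [M.FiniteIndex] : ∃ e, pTors p e G ⊔ M = ⊤ := by
  have := Fintype.ofFinite (G ⧸ M)
  choose k hk using hpG
  refine ⟨Finset.univ.sup fun q : G ⧸ M => k q.out, eq_top_iff.2 fun g _ => ?_⟩
  obtain ⟨m, hm⟩ := QuotientAddGroup.mk_out_eq_add M g
  have hout : (g : G ⧸ M).out ∈ pTors p _ G :=
    pTors_mono (Finset.le_sup (f := fun q : G ⧸ M => k q.out) (Finset.mem_univ _)) (hk _)
  have : g = (g : G ⧸ M).out - m := by rw [hm, add_sub_cancel_right]
  rw [this]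
  exact AddSubgroup.sub_mem _ (AddSubgroup.mem_sup_left hout) (AddSubgroup.mem_sup_right m.2)

variable {T M : AddSubgroup G} {i : ℕ}

theorem levelL_eq_sInf (hMT : M ≤ T) (hex : ∃ n, ¬ pTors p n G ⊓ T ≤ M) :
    levelL p T M = sInf {i | ¬ pTors p i G ⊓ T ≤ M} := by
  rw [levelL, inf_eq_left.2 hMT]
  exact Nat.one_add_sSup_eq_sInf_not
    (fun _ _ hij h => (inf_le_inf_right T (pTors_mono hij)).trans h) (by simp [pTors_zero]) hex

theorem levelL_le (hMT : M ≤ T) (h : ¬ pTors p i G ⊓ T ≤ M) : levelL p T M ≤ i := by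
  rw [levelL_eq_sInf hMT ⟨i, h⟩]
  exact Nat.sInf_le h

theorem not_pTors_levelL_inf_le (hMT : M ≤ T) (hex : ∃ n, ¬ pTors p n G ⊓ T ≤ M) :
    ¬ pTors p (levelL p T M) G ⊓ T ≤ M := by
  rw [levelL_eq_sInf hMT hex]
  exact Nat.sInf_mem hex

theorem levelU_top_le (h : pTors p i G ⊔ M = ⊤) : levelU p ⊤ M ≤ i := by
  simp only [levelU, inf_top_eq]
  exact Nat.sInf_le h

theorem pTors_levelU_top_sup_eq (hex : ∃ e, pTors p e G ⊔ M = ⊤) :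
    pTors p (levelU p ⊤ M) G ⊔ M = ⊤ := by
  simp only [levelU, inf_top_eq]
  exact Nat.sInf_mem hex

theorem exists_not_pTors_inf_le (hMT : M ≤ T) (hTM : ¬ T ≤ M)
    (hex : ∃ e, pTors p e G ⊔ M = ⊤) : ∃ n, ¬ pTors p n G ⊓ T ≤ M :=
  hex.imp fun _ he => AddSubgroup.not_inf_le_of_sup_eq_top hMT hTM he

theorem levelL_eq_levelU (hMT : M ≤ T) (hp : (M.relIndex T).Prime)
    (hex : ∃ n, ¬ pTors p n G ⊓ T ≤ M) : levelL p T M = levelU p T M := by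
  rw [levelL_eq_sInf hMT hex, levelU, inf_eq_left.2 hMT]
  congr 1
  ext i
  exact (AddSubgroup.sup_eq_iff_not_le_of_relIndex_prime inf_le_right hMT hp).symm

theorem levelL_top_le_levelL (hMT : M ≤ T) (hex : ∃ n, ¬ pTors p n G ⊓ T ≤ M) :
    levelL p ⊤ M ≤ levelL p T M :=
  levelL_le le_top fun h => not_pTors_levelL_inf_le hMT hex (inf_le_left.trans (by simpa using h))

theorem levelL_eq_levelL_top_of_pTors_le (hMT : M ≤ T) (hex : ∃ n, ¬ pTors p n G ⊓ T ≤ M)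
    (h : pTors p (levelL p ⊤ M) G ≤ T) : levelL p T M = levelL p ⊤ M := by
  have hexG : ∃ n, ¬ pTors p n G ⊓ ⊤ ≤ M :=
    hex.imp fun _ hn hle => hn (inf_le_left.trans (by simpa using hle))
  refine le_antisymm (levelL_le hMT ?_) (levelL_top_le_levelL hMT hex)
  simpa [inf_eq_left.2 h] using not_pTors_levelL_inf_le le_top hexG

theorem levelL_top_lt_levelU_top (hMT : M ≤ T) (hT : T ≠ ⊤) (hex : ∃ e, pTors p e G ⊔ M = ⊤)
    (h : pTors p (levelL p ⊤ M) G ≤ T) : levelL p ⊤ M < levelU p ⊤ M := by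
  by_contra! hle
  exact hT (top_le_iff.1 (pTors_levelU_top_sup_eq hex ▸ sup_le ((pTors_mono hle).trans h) hMT))

theorem levelU_top_eq_levelL_of_not_pTors_le (hMT : M ≤ T) (hp : (M.relIndex T).Prime)
    (hT : T.index.Prime) (hex : ∃ e, pTors p e G ⊔ M = ⊤)
    (h : ¬ pTors p (levelL p ⊤ M) G ≤ T) : levelU p ⊤ M = levelL p T M := by
  have hTM : ¬ T ≤ M := fun hTM => hp.ne_one (AddSubgroup.relIndex_eq_one.2 hTM)
  have hexT := exists_not_pTors_inf_le hMT hTM hex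
  set c := levelL p T M
  refine le_antisymm (levelU_top_le ?_) (levelL_le hMT ?_)
  · have hc : pTors p c G ⊓ T ⊔ M = T :=
      (AddSubgroup.sup_eq_iff_not_le_of_relIndex_prime inf_le_right hMT hp).2
        (not_pTors_levelL_inf_le hMT hexT)
    have hcT : pTors p c G ⊔ T = ⊤ :=
      (AddSubgroup.sup_eq_iff_not_le_of_relIndex_prime le_top le_top
        (by rwa [AddSubgroup.relIndex_top_right])).2
        fun hle => h ((pTors_mono (levelL_top_le_levelL hMT hexT)).trans hle)
    calc pTors p c G ⊔ M = pTors p c G ⊔ (pTors p c G ⊓ T ⊔ M) := by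
          rw [← sup_assoc, sup_inf_self]
      _ = ⊤ := by rw [hc, hcT]
  · exact AddSubgroup.not_inf_le_of_sup_eq_top hMT hTM (pTors_levelU_top_sup_eq hex)

end Levels

theorem stmt10_general (p : ℕ) [Fact p.Prime] (G : Type*) [AddCommGroup G]
    (hpG : ∀ g : G, ∃ k : ℕ, p ^ k • g = 0)
    (T M : AddSubgroup G) (hT : T.index = p) (hM : M.index = p ^ 2) (hMT : M ≤ T) :
    levelL p T M = levelU p T M ∧
    (pTors p (levelL p ⊤ M) G ≤ T ↔
      (levelL p ⊤ M = levelL p T M ∧ levelL p T M = levelU p T M ∧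
        levelU p T M < levelU p ⊤ M)) ∧
    (¬ pTors p (levelL p ⊤ M) G ≤ T ↔
      (levelL p ⊤ M ≤ levelL p T M ∧ levelL p T M = levelU p T M ∧
        levelU p T M = levelU p ⊤ M)) := by
  have hp : p.Prime := Fact.out
  have hrel : (M.relIndex T).Prime := by
    have h := AddSubgroup.relIndex_mul_index hMT
    rw [hT, hM, sq] at h
    rwa [Nat.eq_of_mul_eq_mul_right hp.pos h]
  have hTtop : T ≠ ⊤ := fun h => hp.ne_one (by rw [← hT, h, AddSubgroup.index_top])
  have : M.FiniteIndex := ⟨hM ▸ pow_ne_zero 2 hp.ne_zero⟩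
  have hex := exists_pTors_sup_eq_top hpG M
  have hexT := exists_not_pTors_inf_le hMT
    (fun h => hrel.ne_one (AddSubgroup.relIndex_eq_one.2 h)) hex
  rw [← levelL_eq_levelU hMT hrel hexT]
  by_cases h : pTors p (levelL p ⊤ M) G ≤ T
  · have hl := levelL_eq_levelL_top_of_pTors_le hMT hexT h
    have hL := levelL_top_lt_levelU_top hMT hTtop hex h
    simp only [h, not_true_eq_false, false_iff, true_iff, true_and]
    omega
  · have hL := levelU_top_eq_levelL_of_not_pTors_le hMT hrel (hT ▸ hp) hex h
    have hl := levelL_top_le_levelL hMT hexT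
    simp only [h, not_false_eq_true, false_iff, true_iff, true_and]
    omega

/-- For `T` of index `p` and `M ⊆ T` of index `p²` in `G`, with `G`-levels `(l, L)`
and `T`-levels `(l_c, L_c)` of `M`: `l_c = L_c`; moreover `G[p^l] ⊆ T` iff
`l = l_c = L_c < L`, and `G[p^l] ⊄ T` iff `l ≤ l_c = L_c = L`. -/
theorem stmt10 (p : ℕ) [Fact p.Prime] (G : Type*) [AddCommGroup G] [Finite G]
    (hpG : ∀ g : G, ∃ k : ℕ, p ^ k • g = 0)
    (T M : AddSubgroup G) (hT : T.index = p) (hM : M.index = p ^ 2) (hMT : M ≤ T) :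
    levelL p T M = levelU p T M ∧
    (pTors p (levelL p ⊤ M) G ≤ T ↔
      (levelL p ⊤ M = levelL p T M ∧ levelL p T M = levelU p T M ∧
        levelU p T M < levelU p ⊤ M)) ∧
    (¬ pTors p (levelL p ⊤ M) G ≤ T ↔
      (levelL p ⊤ M ≤ levelL p T M ∧ levelL p T M = levelU p T M ∧
        levelU p T M = levelU p ⊤ M)) :=
  stmt10_general p G hpG T M hT hM hMT
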